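/- arXiv:1608.02821 — 4 statements merged into one kernel-verified Lean document; each statement's English description precedes it below -/
import Mathlib

section
/- For every nonnegative integer m, the residue at z = 1 of the function g(z) = (1/z)·((z+1)/(z-1))^{2m} is zero; equivalently, the coefficient of y^{-1} in the Laurent expansion of (1/(y+1))·(1 + 2/y)^{2m} at y = 0 vanishes. -/
set_option maxHeartbeats 1000000

open Complex Metric Real

-- points on the circle C(1,r), 0 < r < 1, avoid 0 and 1 and lie in the slit plane
lemma sphere_facts {r : ℝ} (hr0 : 0 < r) (hr1 : r < 1) {z : ℂ}
    (hz : z ∈ sphere (1 : ℂ) r) : z ≠ 0 ∧ z - 1 ≠ 0 ∧ z ∈ slitPlane := by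
  rw [mem_sphere_iff_norm] at hz
  have h1 : z - 1 ≠ 0 := by
    intro h; rw [h, norm_zero] at hz; exact hr0.ne hz
  have hre : 0 < z.re := by
    have : |z.re - 1| ≤ ‖z - 1‖ := by
      simpa using Complex.abs_re_le_norm (z - 1)
    have := abs_sub_lt_iff.mp (lt_of_le_of_lt (hz ▸ this) hr1)
    linarith [this.1]
  have h0 : z ≠ 0 := by
    intro h; rw [h] at hre; simp at hre
  exact ⟨h0, h1, Or.inl hre⟩

lemma contOn_k {r : ℝ} (hr0 : 0 < r) (hr1 : r < 1) (k : ℕ) :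
    ContinuousOn (fun z : ℂ => z⁻¹ * ((z - 1) ^ k)⁻¹) (sphere (1 : ℂ) r) := by
  apply ContinuousOn.mul
  · exact ContinuousOn.inv₀ continuousOn_id fun z hz => (sphere_facts hr0 hr1 hz).1
  · exact ContinuousOn.inv₀ (by fun_prop) fun z hz =>
      pow_ne_zero _ (sphere_facts hr0 hr1 hz).2.1

lemma int_k {r : ℝ} (hr0 : 0 < r) (hr1 : r < 1) (k : ℕ) :
    CircleIntegrable (fun z : ℂ => z⁻¹ * ((z - 1) ^ k)⁻¹) 1 r :=
  (contOn_k hr0 hr1 k).circleIntegrable hr0.le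

-- value of ∮ z⁻¹ (z-1)^{-k}
lemma Ik_val {r : ℝ} (hr0 : 0 < r) (hr1 : r < 1) (k : ℕ) :
    (∮ z in C(1, r), z⁻¹ * ((z - 1) ^ k)⁻¹) =
      if k = 0 then 0 else (-1 : ℂ) ^ (k - 1) * (2 * π * I) := by
  induction k with
  | zero =>
    simp only [if_pos rfl, pow_zero, inv_one, mul_one]
    refine circleIntegral.integral_eq_zero_of_hasDerivWithinAt (f := Complex.log)
      hr0.le fun z hz => ?_
    exact (Complex.hasDerivAt_log (sphere_facts hr0 hr1 hz).2.2).hasDerivWithinAt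
  | succ k ih =>
    have hJ : (∮ z in C(1, r), ((z - 1) ^ (k + 1))⁻¹) =
        if k = 0 then (2 * π * I : ℂ) else 0 := by
      rcases Nat.eq_zero_or_pos k with hk | hk
      · subst hk
        simpa using circleIntegral.integral_sub_center_inv 1 hr0.ne'
      · rw [if_neg hk.ne']
        have : ∀ z : ℂ, ((z - 1) ^ (k + 1))⁻¹ = (z - 1) ^ (-(k + 1 : ℕ) : ℤ) := by
          intro z; rw [zpow_neg, zpow_natCast]
        simp_rw [this]
        apply circleIntegral.integral_sub_zpow_of_ne
        omega
    have hsplit : (∮ z in C(1, r), z⁻¹ * ((z - 1) ^ (k + 1))⁻¹) =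
        (∮ z in C(1, r), ((z - 1) ^ (k + 1))⁻¹ - z⁻¹ * ((z - 1) ^ k)⁻¹) := by
      refine circleIntegral.integral_congr hr0.le fun z hz => ?_
      obtain ⟨h0, h1, -⟩ := sphere_facts hr0 hr1 hz
      field_simp
      ring
    have hint1 : CircleIntegrable (fun z : ℂ => ((z - 1) ^ (k + 1))⁻¹) 1 r := by
      refine ContinuousOn.circleIntegrable hr0.le ?_
      exact ContinuousOn.inv₀ (by fun_prop) fun z hz =>
        pow_ne_zero _ (sphere_facts hr0 hr1 hz).2.1
    rw [hsplit, circleIntegral.integral_sub hint1 (int_k hr0 hr1 k), hJ, ih]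
    rcases Nat.eq_zero_or_pos k with hk | hk
    · subst hk; simp
    · rw [if_neg hk.ne', if_neg (Nat.succ_ne_zero k), if_neg hk.ne']
      have : k + 1 - 1 = (k - 1) + 1 := by omega
      rw [this, pow_succ]
      ring

theorem residue_g0m_at_one_eq_zero (m : ℕ) (r : ℝ) (hr0 : 0 < r) (hr1 : r < 1) :
    (∮ z in C(1, r), (1 / z) * ((z + 1) / (z - 1)) ^ (2 * m)) = 0 := by
  -- rewrite the integrand as a finite sum
  have hcongr : (∮ z in C(1, r), (1 / z) * ((z + 1) / (z - 1)) ^ (2 * m)) =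
      ∮ z in C(1, r), ∑ k ∈ Finset.range (2 * m + 1),
        ((2 * m).choose k * 2 ^ k : ℂ) * (z⁻¹ * ((z - 1) ^ k)⁻¹) := by
    refine circleIntegral.integral_congr hr0.le fun z hz => ?_
    obtain ⟨h0, h1, -⟩ := sphere_facts hr0 hr1 hz
    have hbinom : (z + 1) ^ (2 * m) =
        ∑ k ∈ Finset.range (2 * m + 1),
          (2 : ℂ) ^ k * (z - 1) ^ (2 * m - k) * ((2 * m).choose k) := by
      have := add_pow (2 : ℂ) (z - 1) (2 * m)
      rw [show (2 : ℂ) + (z - 1) = z + 1 by ring] at this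
      exact this
    rw [div_pow, hbinom, Finset.sum_div, one_div, Finset.mul_sum]
    refine Finset.sum_congr rfl fun k hk => ?_
    rw [Finset.mem_range] at hk
    have hk' : k ≤ 2 * m := by omega
    rw [pow_sub₀ _ h1 hk']
    field_simp
  rw [hcongr]
  -- interchange sum and integral
  have hswap : (∮ z in C(1, r), ∑ k ∈ Finset.range (2 * m + 1),
        ((2 * m).choose k * 2 ^ k : ℂ) * (z⁻¹ * ((z - 1) ^ k)⁻¹)) =
      ∑ k ∈ Finset.range (2 * m + 1),
        ∮ z in C(1, r), ((2 * m).choose k * 2 ^ k : ℂ) * (z⁻¹ * ((z - 1) ^ k)⁻¹) := by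
    simp only [circleIntegral, Finset.smul_sum]
    rw [intervalIntegral.integral_finset_sum]
    intro k _
    have : CircleIntegrable
        (fun z : ℂ => ((2 * m).choose k * 2 ^ k : ℂ) * (z⁻¹ * ((z - 1) ^ k)⁻¹)) 1 r :=
      (continuousOn_const.mul (contOn_k hr0 hr1 k)).circleIntegrable hr0.le
    exact (circleIntegrable_iff
      (f := fun z : ℂ => ((2 * m).choose k * 2 ^ k : ℂ) * (z⁻¹ * ((z - 1) ^ k)⁻¹)) r).mp this
  rw [hswap]
  have hval : ∀ k ∈ Finset.range (2 * m + 1),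
      (∮ z in C(1, r), ((2 * m).choose k * 2 ^ k : ℂ) * (z⁻¹ * ((z - 1) ^ k)⁻¹)) =
        (2 * π * I) * ((if k = 0 then 1 else 0) - ((2 * m).choose k : ℂ) * (-2) ^ k) := by
    intro k _
    rw [circleIntegral.integral_const_mul, Ik_val hr0 hr1 k]
    rcases Nat.eq_zero_or_pos k with hk | hk
    · subst hk; simp
    · rw [if_neg hk.ne', if_neg hk.ne']
      have hk2 : (-1 : ℂ) ^ (k - 1) * (-1) = (-1) ^ k := by
        rw [← pow_succ]; congr 1; omega
      have : (-2 : ℂ) ^ k = (-1) ^ k * 2 ^ k := by rw [← neg_one_mul, mul_pow]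
      rw [this, ← hk2]
      ring
  rw [Finset.sum_congr rfl hval, ← Finset.mul_sum, Finset.sum_sub_distrib]
  have h1 : ∑ k ∈ Finset.range (2 * m + 1), (if k = 0 then (1 : ℂ) else 0) = 1 := by
    rw [Finset.sum_ite_eq' (Finset.range (2 * m + 1)) 0 (fun _ => (1 : ℂ))]
    simp
  have h2 : ∑ k ∈ Finset.range (2 * m + 1), ((2 * m).choose k : ℂ) * (-2) ^ k = 1 := by
    have := add_pow (-2 : ℂ) 1 (2 * m)
    rw [show (-2 : ℂ) + 1 = -1 by ring] at this
    have hneg : (-1 : ℂ) ^ (2 * m) = 1 := by rw [pow_mul]; norm_num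
    rw [hneg] at this
    have h3 : ∑ k ∈ Finset.range (2 * m + 1), ((2 * m).choose k : ℂ) * (-2) ^ k =
        ∑ k ∈ Finset.range (2 * m + 1),
          (-2 : ℂ) ^ k * 1 ^ (2 * m - k) * ((2 * m).choose k) := by
      refine Finset.sum_congr rfl fun k hk => ?_
      rw [one_pow, mul_one]
      ring
    rw [h3, ← this]
  rw [h1, h2, sub_self, mul_zero]
end

section
/- For integers k and m with 1 ≤ k ≤ 2|m|, the residues of g_{k,m}(z) = 2^k z^{k-1}/((z-1)^{k+2m}(z+1)^{k-2m}) at z = 1 and at z = -1 are both zero. -/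
open Metric Set Finset


/-- g_{k,m}(z) = 2^k z^{k-1}/((z-1)^{k+2m}(z+1)^{k-2m}), with integer exponents. -/
noncomputable def gkm (k : ℕ) (m : ℤ) (z : ℂ) : ℂ :=
  2 ^ k * z ^ (k - 1) / ((z - 1) ^ ((k : ℤ) + 2 * m) * (z + 1) ^ ((k : ℤ) - 2 * m))

private lemma circleIntegral_finset_sum {ι : Type*} (s : Finset ι) (f : ι → ℂ → ℂ)
    (c : ℂ) (R : ℝ) (h : ∀ i ∈ s, CircleIntegrable (f i) c R) :
    (∮ z in C(c, R), ∑ i ∈ s, f i z) = ∑ i ∈ s, ∮ z in C(c, R), f i z := by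
  simp only [circleIntegral, smul_sum]
  exact intervalIntegral.integral_finset_sum fun i hi => (h i hi).out

private lemma aux_pole (Cst u v : ℂ) (a b N : ℕ) (hN : a + b + 2 ≤ N) (c : ℂ)
    (r : ℝ) (hr : 0 < r) :
    (∮ z in C(c, r), Cst * ((z - c + u) ^ a * (z - c + v) ^ b) * (z - c) ^ (-(N : ℤ))) = 0 := by
  have hc : c ∉ sphere c |r| := by simp [abs_of_pos hr, hr.ne]
  set F : ℕ × ℕ → ℂ → ℂ := fun p z =>
    (Cst * (u ^ (a - p.1) * (a.choose p.1 : ℂ) * (v ^ (b - p.2) * (b.choose p.2 : ℂ)))) *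
      (z - c) ^ ((p.1 : ℤ) + p.2 - N) with hF
  have hEq : EqOn (fun z => Cst * ((z - c + u) ^ a * (z - c + v) ^ b) * (z - c) ^ (-(N : ℤ)))
      (fun z => ∑ p ∈ Finset.range (a + 1) ×ˢ Finset.range (b + 1), F p z) (sphere c r) := by
    intro z hz
    have hz0 : z - c ≠ 0 := by
      rw [sub_ne_zero]
      rintro rfl
      exact hr.ne' (by simpa using hz : (0:ℝ) = r).symm
    simp only [hF]
    rw [add_pow, add_pow, Finset.sum_mul_sum, Finset.sum_product]
    simp only [Finset.mul_sum, Finset.sum_mul]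
    refine Finset.sum_congr rfl fun i hi => Finset.sum_congr rfl fun j hj => ?_
    have hzp : (z - c) ^ ((i : ℤ) + j - N) =
        (z - c) ^ i * (z - c) ^ j * (z - c) ^ (-(N : ℤ)) := by
      rw [← zpow_natCast (z - c) i, ← zpow_natCast (z - c) j, ← zpow_add₀ hz0,
        ← zpow_add₀ hz0]
      congr 1
    rw [hzp]; ring
  rw [circleIntegral.integral_congr hr.le hEq, circleIntegral_finset_sum]
  · refine Finset.sum_eq_zero fun p hp => ?_
    obtain ⟨hp1, hp2⟩ := Finset.mem_product.1 hp
    rw [Finset.mem_range] at hp1 hp2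
    have hn : ((p.1 : ℤ) + p.2 - N) ≠ -1 := by omega
    simp only [hF]
    rw [circleIntegral.integral_const_mul, circleIntegral.integral_sub_zpow_of_ne hn, mul_zero]
  · intro p hp
    have h1 : CircleIntegrable (fun z => (z - c) ^ ((p.1 : ℤ) + p.2 - N)) c r :=
      circleIntegrable_sub_zpow_iff.2 (Or.inr (Or.inr hc))
    simp only [hF]
    exact IntervalIntegrable.const_mul h1 _

private lemma aux_holo (Cst w d : ℂ) (a b N : ℕ) (c : ℂ) (r : ℝ) (hr : 0 ≤ r)
    (hd : ∀ z ∈ closedBall c r, z + d ≠ 0) :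
    (∮ z in C(c, r), Cst * z ^ a * (z + w) ^ b / (z + d) ^ N) = 0 := by
  have hdiff : ∀ z : ℂ, z + d ≠ 0 →
      DifferentiableAt ℂ (fun z : ℂ => Cst * z ^ a * (z + w) ^ b / (z + d) ^ N) z := by
    intro z hz
    exact DifferentiableAt.div (by fun_prop) (by fun_prop) (pow_ne_zero _ hz)
  refine Complex.circleIntegral_eq_zero_of_differentiable_on_off_countable hr
    Set.countable_empty ?_ ?_
  · exact fun z hz => ((hdiff z (hd z hz)).continuousAt).continuousWithinAt
  · exact fun z hz => hdiff z (hd z (ball_subset_closedBall hz.1))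

/- For 1 ≤ k ≤ 2|m|, the residues of g_{k,m} at 1 and at -1 are both zero:
equivalently, the integrals of g_{k,m} over small circles (radius 0 < r < 1)
around 1 and around -1 both vanish. -/
theorem residues_gkm_at_one_and_neg_one_eq_zero (k : ℕ) (m : ℤ)
    (hk1 : 1 ≤ k) (hk2 : (k : ℤ) ≤ 2 * |m|) (r : ℝ) (hr0 : 0 < r) (hr1 : r < 1) :
    (∮ z in C(1, r), gkm k m z) = 0 ∧ (∮ z in C(-1, r), gkm k m z) = 0 := by
  rcases lt_trichotomy m 0 with hm | hm | hm
  · -- m < 0 : pole at -1, holomorphic at 1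
    set N : ℕ := (k - 2 * m).toNat with hNdef
    set b : ℕ := (-2 * m - k).toNat with hbdef
    have habs : |m| = -m := abs_of_neg hm
    rw [habs] at hk2
    have hN : (N : ℤ) = k - 2 * m := Int.toNat_of_nonneg (by omega)
    have hb : (b : ℤ) = -2 * m - k := Int.toNat_of_nonneg (by omega)
    have hgkm : ∀ z : ℂ, gkm k m z = 2 ^ k * z ^ (k - 1) * (z - 1) ^ b / (z + 1) ^ N := by
      intro z
      unfold gkm
      rw [show (k : ℤ) - 2 * m = (N : ℤ) by omega, show (k : ℤ) + 2 * m = -(b : ℤ) by omega,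
        zpow_neg, zpow_natCast, zpow_natCast, div_eq_mul_inv, mul_inv, inv_inv, div_eq_mul_inv]
      ring
    constructor
    · -- holomorphic at 1
      have hE : EqOn (gkm k m)
          (fun z => 2 ^ k * z ^ (k - 1) * (z + (-1)) ^ b / (z + 1) ^ N) (sphere (1 : ℂ) r) :=
        fun z _ => by rw [hgkm z]; ring_nf
      rw [circleIntegral.integral_congr hr0.le hE]
      refine aux_holo _ _ _ _ _ _ _ _ hr0.le fun z hz h0 => ?_
      have hz1 : z = -1 := by linear_combination h0
      rw [hz1, mem_closedBall] at hz
      have : dist (-1 : ℂ) 1 = 2 := by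
        simp [Complex.dist_eq]; norm_num
      rw [this] at hz; linarith
    · -- pole at -1
      have hE : EqOn (gkm k m)
          (fun z => (2 : ℂ) ^ k * ((z - (-1) + (-1)) ^ (k - 1) * (z - (-1) + (-2)) ^ b) *
            (z - (-1)) ^ (-(N : ℤ))) (sphere (-1 : ℂ) r) := by
        intro z _
        simp only [hgkm z, zpow_neg, zpow_natCast, div_eq_mul_inv]
        ring
      rw [circleIntegral.integral_congr hr0.le hE]
      exact aux_pole _ _ _ _ _ _ (by omega) _ _ hr0
  · exfalso; rw [hm] at hk2; simp at hk2; omega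
  · -- m > 0 : pole at 1, holomorphic at -1
    set N : ℕ := (k + 2 * m).toNat with hNdef
    set b : ℕ := (2 * m - k).toNat with hbdef
    have habs : |m| = m := abs_of_pos hm
    rw [habs] at hk2
    have hN : (N : ℤ) = k + 2 * m := Int.toNat_of_nonneg (by omega)
    have hb : (b : ℤ) = 2 * m - k := Int.toNat_of_nonneg (by omega)
    have hgkm : ∀ z : ℂ, gkm k m z = 2 ^ k * z ^ (k - 1) * (z + 1) ^ b / (z - 1) ^ N := by
      intro z
      unfold gkm
      rw [show (k : ℤ) + 2 * m = (N : ℤ) by omega, show (k : ℤ) - 2 * m = -(b : ℤ) by omega,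
        zpow_neg, zpow_natCast, zpow_natCast, div_eq_mul_inv, mul_inv, inv_inv, div_eq_mul_inv]
      ring
    constructor
    · -- pole at 1
      have hE : EqOn (gkm k m)
          (fun z => (2 : ℂ) ^ k * ((z - 1 + 1) ^ (k - 1) * (z - 1 + 2) ^ b) *
            (z - 1) ^ (-(N : ℤ))) (sphere (1 : ℂ) r) := by
        intro z _
        simp only [hgkm z, zpow_neg, zpow_natCast, div_eq_mul_inv]
        ring
      rw [circleIntegral.integral_congr hr0.le hE]
      exact aux_pole _ _ _ _ _ _ (by omega) _ _ hr0
    · -- holomorphic at -1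
      have hE : EqOn (gkm k m)
          (fun z => 2 ^ k * z ^ (k - 1) * (z + 1) ^ b / (z + (-1)) ^ N) (sphere (-1 : ℂ) r) :=
        fun z _ => by rw [hgkm z]; ring_nf
      rw [circleIntegral.integral_congr hr0.le hE]
      refine aux_holo _ _ _ _ _ _ _ _ hr0.le fun z hz h0 => ?_
      have hz1 : z = 1 := by linear_combination h0
      rw [hz1, mem_closedBall] at hz
      have : dist (1 : ℂ) (-1) = 2 := by
        simp [Complex.dist_eq]; norm_num
      rw [this] at hz; linarith
end

section
/- For all integers l ≥ 1 and m ≥ 0, the coefficient of x^{2m+2l-1} in the polynomial (1+x)^{2l-1}/(1+x/2)^{2l-2m} (expanded as a power series) is zero; equivalently, Res(g_{2l,m}, 1) = 0 where g_{2l,m}(z) = 2^{2l} z^{2l-1}/((z-1)^{2l+2m}(z+1)^{2l-2m}). -/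
/-!
Write `u = 1 + x/2`, so that `1 + x = u² - x²/4`. By the binomial theorem the series is then
a combination of the terms `x^{2j} u^{2(2l-1-j) + 2m - 2l}`. Every such term with `2j < 2m + 2l - 1`
is a polynomial of degree `2m + 2l - 2`, one too small to reach `x^{2m+2l-1}`, and the remaining
terms are divisible by `x^{2m+2l}`; the even exponent `2j` never equals the odd `2m + 2l - 1`.
-/

open PowerSeries

namespace PowerSeries

theorem coeff_one_add_C_mul_X_pow_of_lt {R : Type*} [CommRing R] (b : R) {c k : ℕ} (h : c < k) :
    coeff k ((1 + C b * X : R⟦X⟧) ^ c) = 0 := by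
  have hpoly : (1 + C b * X : R⟦X⟧) =
      ((Polynomial.C b * Polynomial.X + Polynomial.C 1 : Polynomial R) : R⟦X⟧) := by
    simp [add_comm]
  rw [hpoly, ← Polynomial.coe_pow, Polynomial.coeff_coe]
  exact Polynomial.coeff_eq_zero_of_natDegree_lt
    ((Polynomial.natDegree_pow_le_of_le c Polynomial.natDegree_linear_le).trans_lt (by simpa using h))

variable {K : Type*} [Field K]

/-- `hdeg` says that `X ^ i * u ^ (d - e)` has degree `k - 1`; with `i ≠ k` it forces either
`k < i` or `e ≤ d`, so the series is a multiple of `X ^ (k + 1)` or a polynomial of degree `< k`. -/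
theorem coeff_X_pow_mul_pow_mul_inv_pow_eq_zero (b : K) {i d e k : ℕ}
    (hdeg : i + d + 1 = k + e) (hik : i ≠ k) :
    coeff k (X ^ i * (1 + C b * X) ^ d * ((1 + C b * X) ^ e)⁻¹) = 0 := by
  rw [mul_assoc, coeff_X_pow_mul']
  split_ifs with hle
  · obtain ⟨c, rfl⟩ : ∃ c, d = e + c := ⟨d - e, by omega⟩
    have hunit : constantCoeff ((1 + C b * X : K⟦X⟧) ^ e) ≠ 0 := by simp
    rw [pow_add, mul_right_comm, PowerSeries.mul_inv_cancel _ hunit, one_mul]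
    exact coeff_one_add_C_mul_X_pow_of_lt b (by omega)
  · rfl

theorem one_add_X_eq_sq_sub (h2 : (2 : K) ≠ 0) :
    (1 + X : K⟦X⟧) = (1 + C (1 / 2) * X) ^ 2 - C (1 / 4) * X ^ 2 := by
  have hhalf : 2 * C (1 / 2 : K) = 1 := by
    rw [← map_ofNat C 2, ← map_mul, mul_one_div_cancel h2, map_one]
  have hquarter : C (1 / 2 : K) ^ 2 = C (1 / 4) := by
    rw [← map_pow]; norm_num
  linear_combination (-X) * hhalf - X ^ 2 * hquarter

theorem one_add_X_pow_eq_sum (h2 : (2 : K) ≠ 0) (n : ℕ) :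
    (1 + X : K⟦X⟧) ^ n = ∑ j ∈ Finset.range (n + 1),
      C ((-1 / 4 : K) ^ j * n.choose j) * (X ^ (2 * j) * (1 + C (1 / 2) * X) ^ (2 * (n - j))) := by
  rw [one_add_X_eq_sq_sub h2, sub_eq_neg_add, add_pow]
  refine Finset.sum_congr rfl fun j _ => ?_
  simp only [map_mul, map_pow, map_natCast, pow_mul, neg_div, map_neg]
  ring

end PowerSeries

theorem coeff_expansion_zero (l m : ℕ) (hl : 1 ≤ l) :
    PowerSeries.coeff (R := ℚ) (2 * m + 2 * l - 1)
      ((1 + PowerSeries.X) ^ (2 * l - 1)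
        * (1 + PowerSeries.C (R := ℚ) (1 / 2) * PowerSeries.X) ^ (2 * m)
        * ((1 + PowerSeries.C (R := ℚ) (1 / 2) * PowerSeries.X) ^ (2 * l))⁻¹) = 0 := by
  rw [one_add_X_pow_eq_sum two_ne_zero, Finset.sum_mul, Finset.sum_mul, map_sum]
  refine Finset.sum_eq_zero fun j hj => ?_
  have hj : j ≤ 2 * l - 1 := Finset.mem_range_succ_iff.mp hj
  rw [show ∀ (c : ℚ) (p q r s : ℚ⟦X⟧), C c * (p * q) * r * s = C c * (p * (q * r) * s) by
      intros; ring,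
    ← pow_add, coeff_C_mul, coeff_X_pow_mul_pow_mul_inv_pow_eq_zero _ (by omega) (by omega),
    mul_zero]
end

section
/- Let Ω be a semi-discrete primal domain and u a twice vertically-differentiable continuous function with Δ^δ u ≥ 0 on the interior of Ω. Then sup_{z ∈ Ω} u(z) = sup_{z ∈ ∂Ω} u(z), i.e. the maximum of u is attained on the boundary. -/
/-!
Perturb `u` by `ε · (Im z)²`, whose semi-discrete Laplacian is `2ε`. The perturbed function is
strictly subharmonic, so it cannot have a maximum at an interior point `z`: there both the
horizontal difference quotient and, by the second derivative test, the vertical second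
derivative are nonpositive. Hence it attains its maximum on `Ω \ I`, and letting `ε → 0`
transfers this to `u`.
-/

open Filter Topology Set

theorem IsLocalMax.iteratedDeriv_two_nonpos {f : ℝ → ℝ} {x : ℝ} (h : IsLocalMax f x)
    (hc : ContinuousAt f x) : iteratedDeriv 2 f x ≤ 0 := by
  by_contra! hpos
  rw [iteratedDeriv_succ, iteratedDeriv_one] at hpos
  -- By the second derivative test `x` is also a local minimum, so `f` is constant near `x`.
  have hmin : IsLocalMin f x := isLocalMin_of_deriv_deriv_pos hpos h.deriv_eq_zero hc
  have hconst : f =ᶠ[𝓝 x] fun _ => f x :=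
    (hmin.and h).mono fun y hy => le_antisymm hy.2 hy.1
  have hzero := (hconst.iteratedDeriv 2).eq_of_nhds
  rw [iteratedDeriv_succ, iteratedDeriv_one, iteratedDeriv_const] at hzero
  simp only [ite_false, OfNat.ofNat_ne_zero] at hzero
  linarith

theorem csSup_image_eq_of_forall_isMaxOn_add_mul {α : Type*} {Ω B : Set α} {u g : α → ℝ}
    (hB : B ⊆ Ω) (hne : Ω.Nonempty) (hu : BddAbove (u '' Ω)) (hg : BddAbove (g '' Ω))
    (hg₀ : ∀ x ∈ Ω, 0 ≤ g x)
    (hmax : ∀ ε > 0, ∃ b ∈ B, IsMaxOn (fun x => u x + ε * g x) Ω b) :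
    sSup (u '' Ω) = sSup (u '' B) := by
  obtain ⟨b₁, hb₁, -⟩ := hmax 1 one_pos
  have huB : BddAbove (u '' B) := hu.mono (image_mono hB)
  refine le_antisymm (csSup_le (hne.image u) ?_)
    (csSup_le_csSup hu ⟨_, b₁, hb₁, rfl⟩ (image_mono hB))
  rintro _ ⟨x, hx, rfl⟩
  obtain ⟨C, hC⟩ := hg
  have hlim : Tendsto (fun ε : ℝ => sSup (u '' B) + ε * C) (𝓝[>] 0) (𝓝 (sSup (u '' B))) := by
    have hcont : Continuous fun ε : ℝ => sSup (u '' B) + ε * C := by fun_prop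
    simpa using (hcont.tendsto 0).mono_left nhdsWithin_le_nhds
  refine ge_of_tendsto hlim ?_
  filter_upwards [self_mem_nhdsWithin] with ε (hε : 0 < ε)
  obtain ⟨b, hbB, hb⟩ := hmax ε hε
  have hbx : u x + ε * g x ≤ u b + ε * g b := hb hx
  have hub : u b ≤ sSup (u '' B) := le_csSup huB ⟨b, hbB, rfl⟩
  have hgb : ε * g b ≤ ε * C := mul_le_mul_of_nonneg_left (hC ⟨b, hB hbB, rfl⟩) hε.le
  linarith [mul_nonneg hε.le (hg₀ x hx)]

section SemiDiscrete

variable {δ : ℝ} {Ω : Set ℂ} {u v : ℂ → ℝ} {z : ℂ}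

noncomputable def semiDiscreteLaplacian (δ : ℝ) (u : ℂ → ℝ) (z : ℂ) : ℝ :=
  (u (z + δ) + u (z - δ) - 2 * u z) / δ ^ 2
    + iteratedDeriv 2 (fun y : ℝ => u (z + y * Complex.I)) 0

def IsSemiDiscreteInteriorPoint (δ : ℝ) (Ω : Set ℂ) (z : ℂ) : Prop :=
  z + δ ∈ Ω ∧ z - δ ∈ Ω ∧ ∀ᶠ y : ℝ in 𝓝 0, z + y * Complex.I ∈ Ω

theorem semiDiscreteLaplacian_add (hu : ContDiffAt ℝ 2 (fun y : ℝ => u (z + y * Complex.I)) 0)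
    (hv : ContDiffAt ℝ 2 (fun y : ℝ => v (z + y * Complex.I)) 0) :
    semiDiscreteLaplacian δ (u + v) z =
      semiDiscreteLaplacian δ u z + semiDiscreteLaplacian δ v z := by
  simp only [semiDiscreteLaplacian, Pi.add_apply]
  rw [iteratedDeriv_fun_add hu hv]
  ring

theorem semiDiscreteLaplacian_mul_im_sq (δ ε : ℝ) (z : ℂ) :
    semiDiscreteLaplacian δ (fun w => ε * w.im ^ 2) z = 2 * ε := by
  have hderiv (y : ℝ) :
      HasDerivAt (fun y : ℝ => ε * (z.im + y) ^ 2) (2 * ε * (z.im + y)) y := by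
    simpa [mul_comm, mul_left_comm, mul_assoc] using
      (((hasDerivAt_id y).const_add z.im).pow 2).const_mul ε
  have hvert : iteratedDeriv 2 (fun y : ℝ => ε * (z.im + y) ^ 2) 0 = 2 * ε := by
    rw [iteratedDeriv_succ, iteratedDeriv_one, funext fun y => (hderiv y).deriv]
    simp
  simp only [semiDiscreteLaplacian, Complex.add_im, Complex.sub_im, Complex.ofReal_im,
    Complex.im_ofReal_mul, Complex.I_im, mul_one, add_zero, sub_zero, hvert]
  ring

theorem IsMaxOn.semiDiscreteLaplacian_nonpos (hmax : IsMaxOn v Ω z)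
    (hz : IsSemiDiscreteInteriorPoint δ Ω z)
    (hc : ContinuousAt (fun y : ℝ => v (z + y * Complex.I)) 0) :
    semiDiscreteLaplacian δ v z ≤ 0 := by
  obtain ⟨hplus, hminus, hvert⟩ := hz
  have hvplus : v (z + δ) ≤ v z := hmax hplus
  have hvminus : v (z - δ) ≤ v z := hmax hminus
  have hdisc : (v (z + δ) + v (z - δ) - 2 * v z) / δ ^ 2 ≤ 0 :=
    div_nonpos_of_nonpos_of_nonneg (by linarith) (sq_nonneg δ)
  have hslice : IsLocalMax (fun y : ℝ => v (z + y * Complex.I)) 0 := by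
    filter_upwards [hvert] with y hy
    simpa using hmax hy
  exact add_nonpos hdisc (hslice.iteratedDeriv_two_nonpos hc)

theorem exists_isMaxOn_mem_diff_of_semiDiscreteLaplacian_pos {I : Set ℂ} (hΩ : IsCompact Ω)
    (hne : Ω.Nonempty) (hv : ContinuousOn v Ω)
    (hI : ∀ z ∈ I, IsSemiDiscreteInteriorPoint δ Ω z)
    (hslice : ∀ z ∈ I, ContinuousAt (fun y : ℝ => v (z + y * Complex.I)) 0)
    (hpos : ∀ z ∈ I, 0 < semiDiscreteLaplacian δ v z) :
    ∃ z ∈ Ω \ I, IsMaxOn v Ω z := by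
  obtain ⟨z, hzΩ, hmax⟩ := hΩ.exists_isMaxOn hne hv
  refine ⟨z, ⟨hzΩ, fun hzI => ?_⟩, hmax⟩
  exact (hpos z hzI).not_ge (hmax.semiDiscreteLaplacian_nonpos (hI z hzI) (hslice z hzI))

end SemiDiscrete

theorem semi_discrete_maximum_principle_general (δ : ℝ)
    (Ω I : Set ℂ) (hΩ : IsCompact Ω) (hne : Ω.Nonempty)
    (hnbr : ∀ z ∈ I, z + (δ : ℂ) ∈ Ω ∧ z - (δ : ℂ) ∈ Ω)
    (hvert : ∀ z ∈ I, ∃ η > (0 : ℝ), ∀ y : ℝ, |y| ≤ η → z + (y : ℂ) * Complex.I ∈ Ω)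
    (u : ℂ → ℝ) (hu : ContinuousOn u Ω)
    (hC2 : ∀ z ∈ I, ContDiffAt ℝ 2 (fun y : ℝ => u (z + (y : ℂ) * Complex.I)) 0)
    (hsub : ∀ z ∈ I,
      0 ≤ (u (z + (δ : ℂ)) + u (z - (δ : ℂ)) - 2 * u z) / δ ^ 2
          + iteratedDeriv 2 (fun y : ℝ => u (z + (y : ℂ) * Complex.I)) 0) :
    sSup (u '' Ω) = sSup (u '' (Ω \ I)) := by
  have hint (z : ℂ) (hz : z ∈ I) : IsSemiDiscreteInteriorPoint δ Ω z := by
    obtain ⟨η, hη, hseg⟩ := hvert z hz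
    refine ⟨(hnbr z hz).1, (hnbr z hz).2, ?_⟩
    filter_upwards [Icc_mem_nhds (neg_lt_zero.2 hη) hη] with y hy
    exact hseg y (abs_le.2 hy)
  have hsq (ε : ℝ) (z : ℂ) :
      ContDiffAt ℝ 2 (fun y : ℝ => ε * (z + y * Complex.I).im ^ 2) 0 := by fun_prop
  refine csSup_image_eq_of_forall_isMaxOn_add_mul sdiff_subset hne
    (hΩ.image_of_continuousOn hu).bddAbove (hΩ.image (Complex.continuous_im.pow 2)).bddAbove
    (fun z _ => sq_nonneg z.im) fun ε hε => ?_
  refine exists_isMaxOn_mem_diff_of_semiDiscreteLaplacian_pos (v := u + fun w => ε * w.im ^ 2)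
    hΩ hne (hu.add (by fun_prop)) hint (fun z hz => ((hC2 z hz).add (hsq ε z)).continuousAt)
    fun z hz => ?_
  rw [semiDiscreteLaplacian_add (hC2 z hz) (hsq ε z), semiDiscreteLaplacian_mul_im_sq]
  linarith [show 0 ≤ semiDiscreteLaplacian δ u z from hsub z hz]

theorem semi_discrete_maximum_principle (δ : ℝ) (hδ : 0 < δ)
    (Ω I : Set ℂ) (hΩ : IsCompact Ω) (hne : Ω.Nonempty) (hIΩ : I ⊆ Ω)
    (hnbr : ∀ z ∈ I, z + (δ : ℂ) ∈ Ω ∧ z - (δ : ℂ) ∈ Ω)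
    (hvert : ∀ z ∈ I, ∃ η > (0 : ℝ), ∀ y : ℝ, |y| ≤ η → z + (y : ℂ) * Complex.I ∈ Ω)
    (u : ℂ → ℝ) (hu : ContinuousOn u Ω)
    (hC2 : ∀ z ∈ I, ContDiffAt ℝ 2 (fun y : ℝ => u (z + (y : ℂ) * Complex.I)) 0)
    (hsub : ∀ z ∈ I,
      0 ≤ (u (z + (δ : ℂ)) + u (z - (δ : ℂ)) - 2 * u z) / δ ^ 2
          + iteratedDeriv 2 (fun y : ℝ => u (z + (y : ℂ) * Complex.I)) 0) :
    sSup (u '' Ω) = sSup (u '' (Ω \ I)) :=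
  semi_discrete_maximum_principle_general δ Ω I hΩ hne hnbr hvert u hu hC2 hsub
end
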